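/- Let X have the Laplace density ρ(x) = ½ exp(−|x|) on ℝ and let Z ~ N(0,1) be independent of X. For p, q > 0 and y ∈ ℝ, the conditional expectation E[X | pX + qZ = y], defined as the ratio (∫ x exp(−(y−px)²/(2q²)) exp(−|x|) dx) / (∫ exp(−(y−px)²/(2q²)) exp(−|x|) dx), equals (1/p) · [exp(−2y/p)(y − q²/p) Φ((y − q²/p)/q) + (y + q²/p) Φ(−(y + q²/p)/q)] / [exp(−2y/p) Φ((y − q²/p)/q) + Φ(−(y + q²/p)/q)], where Φ is the standard normal cumulative distribution function. -/

import Mathlib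

/-!
On each half-line, completing the square writes the integrand
`exp (-(y - p x)² / (2q²)) e^{-|x|}` as a constant multiple of a Gaussian kernel of width `s = q/p`,
centred at `(y - q²/p)/p` for `x ≥ 0` and at `(y + q²/p)/p` for `x ≤ 0`; the two constants differ by
the factor `exp (-2y/p)`. The truncated zeroth moment of such a kernel is `√(2π) s Φ(·)`, and the
truncated first moment adds a boundary term `± s²` times the kernel at the endpoint. Since the
integrand is continuous at `0`, the boundary terms of the two halves cancel.
-/

open MeasureTheory Set
open scoped Topology

noncomputable section

/-- The standard normal cumulative distribution function
`Φ(z) = (2π)^{−1/2} ∫_{−∞}^z exp(−u²/2) du`. -/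
def stdNormalCDF (z : ℝ) : ℝ :=
  (Real.sqrt (2 * Real.pi))⁻¹ * ∫ u in Iic z, Real.exp (-u ^ 2 / 2)

/-- The conditional expectation `E[X | pX + qZ = y]` for `X` Laplace and `Z` standard normal,
defined as a ratio of integrals over `ℝ`. -/
def lapCondExp (p q y : ℝ) : ℝ :=
  (∫ x : ℝ, x * Real.exp (-(y - p * x) ^ 2 / (2 * q ^ 2)) * Real.exp (-|x|)) /
    (∫ x : ℝ, Real.exp (-(y - p * x) ^ 2 / (2 * q ^ 2)) * Real.exp (-|x|))

open Filter Real

theorem integral_comp_sub_right_Ioi {E : Type*} [NormedAddCommGroup E] [NormedSpace ℝ E]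
    (g : ℝ → E) (c m : ℝ) : ∫ x in Ioi c, g (x - m) = ∫ x in Ioi (c - m), g x := by
  have := (measurePreserving_sub_right volume m).setIntegral_preimage_emb
    (measurableEmbedding_subRight m) g (Ioi (c - m))
  rwa [preimage_sub_const_Ioi, sub_add_cancel] at this

theorem integral_comp_sub_div_Ioi {E : Type*} [NormedAddCommGroup E] [NormedSpace ℝ E]
    (g : ℝ → E) (c m : ℝ) {s : ℝ} (hs : 0 < s) :
    ∫ x in Ioi c, g ((x - m) / s) = s • ∫ u in Ioi ((c - m) / s), g u := by
  simp_rw [div_eq_mul_inv]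
  rw [integral_comp_sub_right_Ioi (fun v => g (v * s⁻¹)),
    integral_comp_mul_right_Ioi g _ (inv_pos.2 hs), inv_inv]

theorem integral_Iic_eq_integral_Ioi_comp_neg {E : Type*} [NormedAddCommGroup E]
    [NormedSpace ℝ E] (f : ℝ → E) (c : ℝ) : ∫ x in Iic c, f x = ∫ x in Ioi (-c), f (-x) := by
  rw [integral_comp_neg_Ioi, neg_neg]

theorem sqrt_two_pi_mul_stdNormalCDF (z : ℝ) :
    √(2 * π) * stdNormalCDF z = ∫ u in Ioi (-z), exp (-u ^ 2 / 2) := by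
  rw [stdNormalCDF, mul_inv_cancel_left₀ (by positivity), ← integral_comp_neg_Iic]
  simp only [neg_sq]

theorem stdNormalCDF_pos (z : ℝ) : 0 < stdNormalCDF z := by
  have : NeZero (volume.restrict (Iic z)) := ⟨by simp⟩
  have hint : Integrable (fun u : ℝ => exp (-u ^ 2 / 2)) := by
    simpa [div_eq_inv_mul] using integrable_exp_neg_mul_sq (b := 2⁻¹) (by norm_num)
  exact mul_pos (by positivity) (integral_exp_pos hint.integrableOn)

def gaussianKernel (m s x : ℝ) : ℝ := exp (-(x - m) ^ 2 / (2 * s ^ 2))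

namespace gaussianKernel

variable (m : ℝ) {s : ℝ}

theorem eq_exp_sq_div (x : ℝ) : gaussianKernel m s x = exp (-((x - m) / s) ^ 2 / 2) := by
  rw [gaussianKernel]; ring_nf

theorem comp_neg (x : ℝ) : gaussianKernel m s (-x) = gaussianKernel (-m) s x := by
  rw [gaussianKernel, gaussianKernel]; ring_nf

theorem hasDerivAt (x : ℝ) :
    HasDerivAt (gaussianKernel m s) (-(x - m) / s ^ 2 * gaussianKernel m s x) x := by
  have h : HasDerivAt (fun x => -(x - m) ^ 2 / (2 * s ^ 2)) (-(x - m) / s ^ 2) x := by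
    refine ((((hasDerivAt_id' x).sub_const m).fun_pow 2).fun_neg.div_const _).congr_deriv ?_
    ring
  rw [mul_comm]
  exact h.exp

theorem tendsto_atTop (hs : s ≠ 0) : Tendsto (gaussianKernel m s) atTop (𝓝 0) := by
  have h : Tendsto (fun x : ℝ => (x - m) ^ 2) atTop atTop :=
    (tendsto_pow_atTop two_ne_zero).comp (tendsto_atTop_add_const_right _ (-m) tendsto_id)
  exact tendsto_exp_atBot.comp ((tendsto_neg_atTop_atBot.comp h).atBot_div_const (by positivity))

theorem integrable (hs : s ≠ 0) : Integrable (gaussianKernel m s) := by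
  have h := (integrable_exp_neg_mul_sq (b := (2 * s ^ 2)⁻¹) (by positivity)).comp_sub_right m
  convert h using 2 with x
  rw [gaussianKernel]; ring_nf

theorem integrable_sub_mul (hs : s ≠ 0) :
    Integrable fun x => (x - m) * gaussianKernel m s x := by
  have h := (integrable_mul_exp_neg_mul_sq (b := (2 * s ^ 2)⁻¹) (by positivity)).comp_sub_right m
  refine h.congr (.of_forall fun x => ?_)
  simp only [gaussianKernel]
  congr 2; ring

theorem integrable_mul (hs : s ≠ 0) : Integrable fun x => x * gaussianKernel m s x := by
  refine ((integrable_sub_mul m hs).add ((integrable m hs).const_mul m)).congr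
    (.of_forall fun x => ?_)
  simp only [Pi.add_apply]; ring

theorem integral_Ioi (c : ℝ) (hs : 0 < s) :
    ∫ x in Ioi c, gaussianKernel m s x = √(2 * π) * s * stdNormalCDF ((m - c) / s) := by
  simp_rw [eq_exp_sq_div]
  rw [integral_comp_sub_div_Ioi (fun u => exp (-u ^ 2 / 2)) c m hs, smul_eq_mul, mul_right_comm,
    sqrt_two_pi_mul_stdNormalCDF, ← neg_div, neg_sub, mul_comm]

theorem integral_Ioi_sub_mul (c : ℝ) (hs : s ≠ 0) :
    ∫ x in Ioi c, (x - m) * gaussianKernel m s x = s ^ 2 * gaussianKernel m s c := by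
  have hderiv (x : ℝ) (_ : x ∈ Ici c) : HasDerivAt (fun x => -s ^ 2 * gaussianKernel m s x)
      ((x - m) * gaussianKernel m s x) x :=
    ((hasDerivAt m x).const_mul _).congr_deriv (by field_simp)
  rw [integral_Ioi_of_hasDerivAt_of_tendsto' hderiv (integrable_sub_mul m hs).integrableOn
    (by simpa using (tendsto_atTop m hs).const_mul (-s ^ 2))]
  ring

theorem integral_Ioi_mul (c : ℝ) (hs : 0 < s) :
    ∫ x in Ioi c, x * gaussianKernel m s x =
      m * (√(2 * π) * s * stdNormalCDF ((m - c) / s)) + s ^ 2 * gaussianKernel m s c := by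
  have hsplit (x : ℝ) : x * gaussianKernel m s x =
      (x - m) * gaussianKernel m s x + m * gaussianKernel m s x := by ring
  simp_rw [hsplit]
  rw [integral_add (integrable_sub_mul m hs.ne').integrableOn
    ((integrable m hs.ne').const_mul m).integrableOn, integral_const_mul, integral_Ioi m c hs,
    integral_Ioi_sub_mul m c hs.ne', add_comm]

theorem integral_Iic (c : ℝ) (hs : 0 < s) :
    ∫ x in Iic c, gaussianKernel m s x = √(2 * π) * s * stdNormalCDF ((c - m) / s) := by
  rw [integral_Iic_eq_integral_Ioi_comp_neg]
  simp_rw [comp_neg]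
  rw [integral_Ioi _ _ hs, neg_sub_neg]

theorem integral_Iic_mul (c : ℝ) (hs : 0 < s) :
    ∫ x in Iic c, x * gaussianKernel m s x =
      m * (√(2 * π) * s * stdNormalCDF ((c - m) / s)) - s ^ 2 * gaussianKernel m s c := by
  rw [integral_Iic_eq_integral_Ioi_comp_neg]
  simp_rw [comp_neg, neg_mul]
  rw [integral_neg, integral_Ioi_mul _ _ hs, neg_sub_neg, ← comp_neg, neg_neg]
  ring

end gaussianKernel

theorem integral_eq_integral_Iic_add_integral_Ioi_of_eq {f g h : ℝ → ℝ} (c : ℝ)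
    (hg : Integrable g) (hh : Integrable h) (hfg : ∀ x ≤ c, f x = g x)
    (hfh : ∀ x, c < x → f x = h x) :
    ∫ x, f x = (∫ x in Iic c, g x) + ∫ x in Ioi c, h x := by
  have hIic : EqOn f g (Iic c) := fun x hx => hfg x hx
  have hIoi : EqOn f h (Ioi c) := fun x hx => hfh x hx
  rw [← intervalIntegral.integral_Iic_add_Ioi
    (hg.integrableOn.congr_fun hIic.symm measurableSet_Iic)
    (hh.integrableOn.congr_fun hIoi.symm measurableSet_Ioi),
    setIntegral_congr_fun measurableSet_Iic hIic, setIntegral_congr_fun measurableSet_Ioi hIoi]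

section TwoSidedGaussian

variable {f : ℝ → ℝ} {A B a b s : ℝ}

theorem integral_of_eq_mul_gaussianKernel (hs : 0 < s)
    (hpos : ∀ x, 0 ≤ x → f x = A * gaussianKernel a s x)
    (hneg : ∀ x ≤ 0, f x = B * gaussianKernel b s x) :
    ∫ x, f x = √(2 * π) * s * (A * stdNormalCDF (a / s) + B * stdNormalCDF (-b / s)) := by
  rw [integral_eq_integral_Iic_add_integral_Ioi_of_eq 0
    ((gaussianKernel.integrable b hs.ne').const_mul B)
    ((gaussianKernel.integrable a hs.ne').const_mul A) hneg (fun x hx => hpos x hx.le),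
    integral_const_mul, integral_const_mul, gaussianKernel.integral_Iic b 0 hs,
    gaussianKernel.integral_Ioi a 0 hs, zero_sub, sub_zero]
  ring

theorem integral_mul_of_eq_mul_gaussianKernel (hs : 0 < s)
    (hpos : ∀ x, 0 ≤ x → f x = A * gaussianKernel a s x)
    (hneg : ∀ x ≤ 0, f x = B * gaussianKernel b s x) :
    ∫ x, x * f x =
      √(2 * π) * s * (A * a * stdNormalCDF (a / s) + B * b * stdNormalCDF (-b / s)) := by
  rw [integral_eq_integral_Iic_add_integral_Ioi_of_eq 0
    ((gaussianKernel.integrable_mul b hs.ne').const_mul B)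
    ((gaussianKernel.integrable_mul a hs.ne').const_mul A)
    (fun x hx => by rw [hneg x hx, mul_left_comm])
    (fun x hx => by rw [hpos x hx.le, mul_left_comm]),
    integral_const_mul, integral_const_mul, gaussianKernel.integral_Iic_mul b 0 hs,
    gaussianKernel.integral_Ioi_mul a 0 hs, zero_sub, sub_zero]
  -- the boundary terms `∓ s² f 0` of the two half-line integrals cancel
  linear_combination s ^ 2 * ((hpos 0 le_rfl).symm.trans (hneg 0 le_rfl))

end TwoSidedGaussian

theorem exp_neg_sq_mul_exp_neg_abs_of_nonneg {p q : ℝ} (hp : p ≠ 0) (hq : q ≠ 0) (y : ℝ)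
    {x : ℝ} (hx : 0 ≤ x) :
    exp (-(y - p * x) ^ 2 / (2 * q ^ 2)) * exp (-|x|) = exp (-2 * y / p) *
      exp (y / p + q ^ 2 / (2 * p ^ 2)) * gaussianKernel ((y - q ^ 2 / p) / p) (q / p) x := by
  rw [abs_of_nonneg hx, gaussianKernel, ← exp_add, ← exp_add, ← exp_add]
  congr 1
  field_simp
  ring

theorem exp_neg_sq_mul_exp_neg_abs_of_nonpos {p q : ℝ} (hp : p ≠ 0) (hq : q ≠ 0) (y : ℝ)
    {x : ℝ} (hx : x ≤ 0) :
    exp (-(y - p * x) ^ 2 / (2 * q ^ 2)) * exp (-|x|) =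
      exp (y / p + q ^ 2 / (2 * p ^ 2)) * gaussianKernel ((y + q ^ 2 / p) / p) (q / p) x := by
  rw [abs_of_nonpos hx, neg_neg, gaussianKernel, ← exp_add, ← exp_add]
  congr 1
  field_simp
  ring

/-- the closed form of `E[X | pX + qZ = y]` in terms of the standard normal CDF
for Laplace `X` and independent standard normal `Z`. -/
theorem laplace_cond_exp_formula (p q y : ℝ) (hp : 0 < p) (hq : 0 < q) :
    lapCondExp p q y = (1 / p) *
      ((Real.exp (-2 * y / p) * (y - q ^ 2 / p) * stdNormalCDF ((y - q ^ 2 / p) / q) +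
          (y + q ^ 2 / p) * stdNormalCDF (-(y + q ^ 2 / p) / q)) /
        (Real.exp (-2 * y / p) * stdNormalCDF ((y - q ^ 2 / p) / q) +
          stdNormalCDF (-(y + q ^ 2 / p) / q))) := by
  have hs : 0 < q / p := div_pos hq hp
  have hpos (x : ℝ) (hx : 0 ≤ x) := exp_neg_sq_mul_exp_neg_abs_of_nonneg hp.ne' hq.ne' y hx
  have hneg (x : ℝ) (hx : x ≤ 0) := exp_neg_sq_mul_exp_neg_abs_of_nonpos hp.ne' hq.ne' y hx
  simp_rw [lapCondExp, mul_assoc _ (exp _)]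
  rw [integral_mul_of_eq_mul_gaussianKernel hs hpos hneg,
    integral_of_eq_mul_gaussianKernel hs hpos hneg]
  have harg₁ : (y - q ^ 2 / p) / p / (q / p) = (y - q ^ 2 / p) / q := by field_simp
  have harg₂ : -((y + q ^ 2 / p) / p) / (q / p) = -(y + q ^ 2 / p) / q := by field_simp
  rw [harg₁, harg₂]
  have hΦ₁ := stdNormalCDF_pos ((y - q ^ 2 / p) / q)
  have hΦ₂ := stdNormalCDF_pos (-(y + q ^ 2 / p) / q)
  have hp₀ := hp.ne'
  field_simp
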